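/- If X ≼_{BL} Y (Bickel-Lehmann less dispersed) and E[X] = E[Y], then Y is a mean preserving increase in risk of X: for every concave function f on R, E[f(X)] ≥ E[f(Y)]. -/

import Mathlib

/-!
Realise `X` and `Y` on `(0, 1)` with Lebesgue measure as `Q_X` and `Q_Y`. The difference
`d = Q_Y - Q_X` is nondecreasing with mean zero, so there is a level `m` with `Q_Y ≤ Q_X ≤ m`
where `d < 0` and `m ≤ Q_X ≤ Q_Y` where `d ≥ 0`. Since the slopes of a convex `g` are
increasing, on both sides `g (Q_X) + c * d ≤ g (Q_Y)`, where `c` is the right derivative of `g`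
at `m`; integrating and using `∫ d = 0` gives `E g(X) ≤ E g(Y)`. Apply this to `g = -f`.
-/

open MeasureTheory

/-- The (upper) quantile function of a distribution on ℝ. -/
noncomputable def quantile (ν : Measure ℝ) (t : ℝ) : ℝ :=
  sInf {x : ℝ | ν (Set.Iic x) > ENNReal.ofReal t}

open Set Filter ProbabilityTheory

theorem ConvexOn.add_rightDeriv_mul_sub_le {g : ℝ → ℝ} (hg : ConvexOn ℝ univ g)
    {m x y : ℝ} (h : y ≤ x ∧ x ≤ m ∨ m ≤ x ∧ x ≤ y) :
    g x + derivWithin g (Ioi m) m * (y - x) ≤ g y := by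
  rcases h with ⟨hyx, hxm⟩ | ⟨hmx, hxy⟩
  · rcases hyx.eq_or_lt with rfl | hyx
    · simp
    have hslope : slope g y x ≤ derivWithin g (Ioi m) m := calc
      slope g y x ≤ derivWithin g (Iio x) x :=
        hg.slope_le_leftDeriv_of_mem_interior trivial (by simp) hyx
      _ ≤ derivWithin g (Ioi x) x := hg.leftDeriv_le_rightDeriv_of_mem_interior (by simp)
      _ ≤ derivWithin g (Ioi m) m := hg.monotoneOn_rightDeriv (by simp) (by simp) hxm
    rw [slope_def_field, div_le_iff₀ (sub_pos.2 hyx)] at hslope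
    linarith
  · rcases hxy.eq_or_lt with rfl | hxy
    · simp
    have hslope : derivWithin g (Ioi m) m ≤ slope g x y := calc
      _ ≤ derivWithin g (Ioi x) x := hg.monotoneOn_rightDeriv (by simp) (by simp) hmx
      _ ≤ slope g x y := hg.rightDeriv_le_slope_of_mem_interior (by simp) trivial hxy
    rw [slope_def_field, le_div_iff₀ (sub_pos.2 hxy)] at hslope
    linarith

theorem MonotoneOn.exists_crossing_level {α : Type*} [LinearOrder α] {s : Set α}
    {q₁ q₂ : α → ℝ} (hq₁ : MonotoneOn q₁ s)
    (hd : MonotoneOn (fun u => q₂ u - q₁ u) s) {a b : α} (ha : a ∈ s) (hqa : q₂ a < q₁ a)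
    (hb : b ∈ s) (hqb : q₁ b ≤ q₂ b) :
    ∃ m, ∀ u ∈ s, q₂ u ≤ q₁ u ∧ q₁ u ≤ m ∨ m ≤ q₁ u ∧ q₁ u ≤ q₂ u := by
  set A := {u ∈ s | q₂ u < q₁ u}
  have hA_lt : ∀ v ∈ A, ∀ u ∈ s, q₁ u ≤ q₂ u → v < u := fun v hv u hu huv =>
    lt_of_not_ge fun hle => by linarith [hd hu hv.1 hle, hv.2]
  have hbdd : BddAbove (q₁ '' A) :=
    ⟨q₁ b, forall_mem_image.2 fun v hv => hq₁ hv.1 hb (hA_lt v hv b hb hqb).le⟩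
  refine ⟨sSup (q₁ '' A), fun u hu => ?_⟩
  rcases lt_or_ge (q₂ u) (q₁ u) with hlt | hge
  · exact Or.inl ⟨hlt.le, le_csSup hbdd (mem_image_of_mem q₁ ⟨hu, hlt⟩)⟩
  · refine Or.inr ⟨csSup_le (Nonempty.image q₁ ⟨a, ha, hqa⟩) ?_, hge⟩
    exact forall_mem_image.2 fun v hv => hq₁ hv.1 hu (hA_lt v hv u hu hge).le

section ConvexOrder

variable {α : Type*} [MeasurableSpace α] [LinearOrder α] {μ : Measure α} {s : Set α}
  {q₁ q₂ : α → ℝ} {g : ℝ → ℝ}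

theorem exists_ae_add_mul_sub_le_of_monotoneOn_sub (hs : ∀ᵐ u ∂μ, u ∈ s)
    (hq₁ : MonotoneOn q₁ s) (hd : MonotoneOn (fun u => q₂ u - q₁ u) s)
    (hdi : Integrable (fun u => q₂ u - q₁ u) μ) (hd₀ : ∫ u, q₂ u - q₁ u ∂μ = 0)
    (hg : ConvexOn ℝ univ g) :
    ∃ c, ∀ᵐ u ∂μ, g (q₁ u) + c * (q₂ u - q₁ u) ≤ g (q₂ u) := by
  by_cases hcross : (∃ a ∈ s, q₂ a < q₁ a) ∧ ∃ b ∈ s, q₁ b ≤ q₂ b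
  · obtain ⟨⟨a, ha, hqa⟩, ⟨b, hb, hqb⟩⟩ := hcross
    obtain ⟨m, hm⟩ := hq₁.exists_crossing_level hd ha hqa hb hqb
    exact ⟨_, hs.mono fun u hu => hg.add_rightDeriv_mul_sub_le (hm u hu)⟩
  -- Otherwise `q₂ - q₁` has constant sign on `s`, so its vanishing mean forces it to vanish a.e.
  have hzero : ∀ᵐ u ∂μ, q₂ u - q₁ u = 0 := by
    rw [not_and_or] at hcross
    push Not at hcross
    rcases hcross with hge | hlt
    · exact (integral_eq_zero_iff_of_nonneg_ae (hs.mono fun u hu => sub_nonneg.2 (hge u hu))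
        hdi).1 hd₀
    · have hneg := (integral_eq_zero_iff_of_nonneg_ae
        (hs.mono fun u hu => neg_nonneg.2 (sub_nonpos.2 (hlt u hu).le)) hdi.neg).1
        (by rw [integral_neg, hd₀, neg_zero])
      exact hneg.mono fun u hu => neg_eq_zero.1 hu
  refine ⟨0, hzero.mono fun u hu => ?_⟩
  rw [sub_eq_zero.1 hu, zero_mul, add_zero]

theorem integral_comp_le_integral_comp_of_monotoneOn_sub (hs : ∀ᵐ u ∂μ, u ∈ s)
    (hq₁ : MonotoneOn q₁ s) (hd : MonotoneOn (fun u => q₂ u - q₁ u) s)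
    (hq₁i : Integrable q₁ μ) (hq₂i : Integrable q₂ μ) (hmean : ∫ u, q₁ u ∂μ = ∫ u, q₂ u ∂μ)
    (hg : ConvexOn ℝ univ g) (hg₁ : Integrable (fun u => g (q₁ u)) μ)
    (hg₂ : Integrable (fun u => g (q₂ u)) μ) :
    ∫ u, g (q₁ u) ∂μ ≤ ∫ u, g (q₂ u) ∂μ := by
  have hdi : Integrable (fun u => q₂ u - q₁ u) μ := hq₂i.sub hq₁i
  have hd₀ : ∫ u, q₂ u - q₁ u ∂μ = 0 := by rw [integral_sub hq₂i hq₁i, hmean, sub_self]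
  obtain ⟨c, hc⟩ := exists_ae_add_mul_sub_le_of_monotoneOn_sub hs hq₁ hd hdi hd₀ hg
  calc ∫ u, g (q₁ u) ∂μ = ∫ u, g (q₁ u) + c * (q₂ u - q₁ u) ∂μ := by
        rw [integral_add hg₁ (hdi.const_mul c), integral_const_mul, hd₀, mul_zero, add_zero]
    _ ≤ ∫ u, g (q₂ u) ∂μ := integral_mono_ae (hg₁.add (hdi.const_mul c)) hg₂ hc

end ConvexOrder

section Quantile

variable {ν : Measure ℝ} {t x : ℝ}

theorem quantile_eq_sInf_lt_cdf [IsProbabilityMeasure ν] (ht : 0 < t) :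
    quantile ν t = sInf {x | t < cdf ν x} := by
  unfold quantile
  congr 1
  ext x
  simp only [mem_ofPred_eq, gt_iff_lt, ← ofReal_cdf, ENNReal.ofReal_lt_ofReal_iff',
    and_iff_left_iff_imp]
  exact ht.trans

theorem bddBelow_setOf_lt_cdf (ht : 0 < t) : BddBelow {x | t < cdf ν x} := by
  obtain ⟨y, hy⟩ := ((tendsto_cdf_atBot ν).eventually_lt_const ht).exists
  exact ⟨y, fun z hz => le_of_not_gt fun hzy => ((cdf ν).mono hzy.le).not_gt (hy.trans hz)⟩

theorem nonempty_setOf_lt_cdf (ht : t < 1) : {x | t < cdf ν x}.Nonempty :=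
  ((tendsto_cdf_atTop ν).eventually_const_lt ht).exists

theorem quantile_le_of_lt_cdf [IsProbabilityMeasure ν] (ht : 0 < t) (h : t < cdf ν x) :
    quantile ν t ≤ x := by
  rw [quantile_eq_sInf_lt_cdf ht]
  exact csInf_le (bddBelow_setOf_lt_cdf ht) h

theorem lt_quantile_of_cdf_lt [IsProbabilityMeasure ν] (ht₀ : 0 < t) (ht₁ : t < 1)
    (h : cdf ν x < t) : x < quantile ν t := by
  obtain ⟨y, hy, hxy⟩ :=
    ((((cdf ν).right_continuous x).mono Ioi_subset_Ici_self).eventually_lt_const h).and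
      self_mem_nhdsWithin |>.exists
  rw [quantile_eq_sInf_lt_cdf ht₀]
  refine lt_of_lt_of_le hxy (le_csInf (nonempty_setOf_lt_cdf ht₁) fun z hz => ?_)
  exact le_of_not_gt fun hzy => ((cdf ν).mono hzy.le).not_gt (hy.trans hz)

theorem monotoneOn_quantile [IsProbabilityMeasure ν] : MonotoneOn (quantile ν) (Ioo 0 1) := by
  intro s hs t ht hst
  rw [quantile_eq_sInf_lt_cdf hs.1, quantile_eq_sInf_lt_cdf ht.1]
  exact csInf_le_csInf (bddBelow_setOf_lt_cdf hs.1) (nonempty_setOf_lt_cdf ht.2)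
    fun x hx => hst.trans_lt hx

theorem volume_setOf_quantile_le [IsProbabilityMeasure ν] (x : ℝ) :
    volume {t ∈ Ioo 0 1 | quantile ν t ≤ x} = ν (Iic x) := by
  rw [← ofReal_cdf]
  apply le_antisymm
  · calc volume {t ∈ Ioo 0 1 | quantile ν t ≤ x} ≤ volume (Ioc 0 (cdf ν x)) :=
          measure_mono fun t ⟨ht, hq⟩ =>
            ⟨ht.1, le_of_not_gt fun h => (lt_quantile_of_cdf_lt ht.1 ht.2 h).not_ge hq⟩
      _ = ENNReal.ofReal (cdf ν x) := by rw [Real.volume_Ioc, sub_zero]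
  · calc ENNReal.ofReal (cdf ν x) = volume (Ioo 0 (cdf ν x)) := by
          rw [Real.volume_Ioo, sub_zero]
      _ ≤ volume {t ∈ Ioo 0 1 | quantile ν t ≤ x} := measure_mono fun t ht =>
          ⟨⟨ht.1, ht.2.trans_le (cdf_le_one ν x)⟩, quantile_le_of_lt_cdf ht.1 ht.2⟩

theorem aemeasurable_quantile [IsProbabilityMeasure ν] :
    AEMeasurable (quantile ν) (volume.restrict (Ioo 0 1)) :=
  aemeasurable_restrict_of_monotoneOn measurableSet_Ioo monotoneOn_quantile

theorem map_quantile [IsProbabilityMeasure ν] :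
    (volume.restrict (Ioo 0 1)).map (quantile ν) = ν := by
  refine (Measure.ext_of_Iic ν _ fun x => ?_).symm
  rw [Measure.map_apply_of_aemeasurable aemeasurable_quantile measurableSet_Iic,
    Measure.restrict_apply' measurableSet_Ioo, ← volume_setOf_quantile_le, inter_comm]
  rfl

end Quantile

section QuantileRepresentation

variable {Ω : Type*} [MeasurableSpace Ω] {P : Measure Ω} [IsProbabilityMeasure P] {X : Ω → ℝ}
  {φ : ℝ → ℝ}

theorem integral_comp_quantile_map (hX : AEMeasurable X P)
    (hφ : AEStronglyMeasurable φ (P.map X)) :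
    ∫ t in Ioo 0 1, φ (quantile (P.map X) t) = ∫ ω, φ (X ω) ∂P := by
  have := Measure.isProbabilityMeasure_map hX
  have hφ' : AEStronglyMeasurable φ ((volume.restrict (Ioo 0 1)).map (quantile (P.map X))) := by
    rwa [map_quantile]
  rw [← integral_map aemeasurable_quantile hφ', map_quantile, integral_map hX hφ]

theorem integrable_comp_quantile_map_iff (hX : AEMeasurable X P)
    (hφ : AEStronglyMeasurable φ (P.map X)) :
    Integrable (fun t => φ (quantile (P.map X) t)) (volume.restrict (Ioo 0 1)) ↔
      Integrable (fun ω => φ (X ω)) P := by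
  have := Measure.isProbabilityMeasure_map hX
  have hφ' : AEStronglyMeasurable φ ((volume.restrict (Ioo 0 1)).map (quantile (P.map X))) := by
    rwa [map_quantile]
  refine (integrable_map_measure hφ' aemeasurable_quantile).symm.trans ?_
  rw [map_quantile]
  exact integrable_map_measure hφ hX

end QuantileRepresentation

/-- if X ≼_BL Y (Q_Y - Q_X nondecreasing on (0,1)) and E[X] = E[Y], then
Y is a mean preserving increase in risk of X: E[f(X)] ≥ E[f(Y)] for all concave f. -/
theorem stmt_8 {Ω : Type*} [MeasurableSpace Ω] (P : Measure Ω) [IsProbabilityMeasure P]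
    (X Y : Ω → ℝ) (hX : Measurable X) (hY : Measurable Y)
    (hXi : Integrable X P) (hYi : Integrable Y P)
    (hBL : MonotoneOn (fun u => quantile (P.map Y) u - quantile (P.map X) u) (Set.Ioo 0 1))
    (hmean : ∫ ω, X ω ∂P = ∫ ω, Y ω ∂P)
    (f : ℝ → ℝ) (hf : ConcaveOn ℝ Set.univ f)
    (hfX : Integrable (fun ω => f (X ω)) P) (hfY : Integrable (fun ω => f (Y ω)) P) :
    ∫ ω, f (Y ω) ∂P ≤ ∫ ω, f (X ω) ∂P := by
  have hXm : AEMeasurable X P := hX.aemeasurable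
  have hYm : AEMeasurable Y P := hY.aemeasurable
  have := Measure.isProbabilityMeasure_map hXm
  have hfm : ∀ {Z : Ω → ℝ}, AEStronglyMeasurable f (P.map Z) :=
    (continuousOn_univ.1 (by simpa using hf.continuousOn_interior)).aestronglyMeasurable
  have key := integral_comp_le_integral_comp_of_monotoneOn_sub
    (ae_restrict_mem measurableSet_Ioo) monotoneOn_quantile hBL
    ((integrable_comp_quantile_map_iff hXm aestronglyMeasurable_id).2 hXi)
    ((integrable_comp_quantile_map_iff hYm aestronglyMeasurable_id).2 hYi)
    ((integral_comp_quantile_map hXm aestronglyMeasurable_id).trans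
      (hmean.trans (integral_comp_quantile_map hYm aestronglyMeasurable_id).symm))
    hf.neg ((integrable_comp_quantile_map_iff hXm hfm).2 hfX).neg
    ((integrable_comp_quantile_map_iff hYm hfm).2 hfY).neg
  simp only [Pi.neg_apply, integral_neg, neg_le_neg_iff] at key
  rwa [integral_comp_quantile_map hXm hfm, integral_comp_quantile_map hYm hfm] at key
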